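/- arXiv:math/9310233 — 3 statements merged into one kernel-verified Lean document; each statement's English description precedes it below -/
import Mathlib

section
/- Let {T_ℓ}_{ℓ∈L} be operators on a Hilbert space H satisfying the Cuntz relations (T_ℓ*T_{ℓ'} = δ_{ℓℓ'}I, Σ_ℓ T_ℓ T_ℓ* = I), and let e₀ ∈ H be a unit vector with T_0 e₀ = e₀ for a distinguished index 0 ∈ L. Then the vectors T_{ℓ_1}⋯T_{ℓ_m} e₀ (m ≥ 0, ℓ_i ∈ L) are unit vectors, and T_{ℓ_1}⋯T_{ℓ_m} e₀ ⊥ T_{ℓ'_1}⋯T_{ℓ'_n} e₀ whenever the (infinite, 0-padded) sequences (ℓ_1,...,ℓ_m,0,0,...) and (ℓ'_1,...,ℓ'_n,0,0,...) differ. -/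
open scoped InnerProductSpace

/-- The word vector `T_{ℓ₁} ⋯ T_{ℓₙ} e₀`. -/
noncomputable def cuntzWord {H : Type*} [NormedAddCommGroup H] [InnerProductSpace ℂ H]
    {L : Type*} (T : L → H →L[ℂ] H) (e0 : H) (w : List L) : H :=
  w.foldr (fun l v => T l v) e0

section Aux

variable {H : Type*} [NormedAddCommGroup H] [InnerProductSpace ℂ H]
    [CompleteSpace H]
    {L : Type*} [Fintype L] [DecidableEq L]
    (T : L → H →L[ℂ] H)

lemma innerT (h1 : ∀ l l' : L, (ContinuousLinearMap.adjoint (T l)).comp (T l') =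
      if l = l' then 1 else 0) (l l' : L) (x y : H) :
    ⟪T l x, T l' y⟫_ℂ = if l = l' then ⟪x, y⟫_ℂ else 0 := by
  have : ⟪T l x, T l' y⟫_ℂ = ⟪x, ((ContinuousLinearMap.adjoint (T l)).comp (T l')) y⟫_ℂ := by
    simp [ContinuousLinearMap.adjoint_inner_right]
  rw [this, h1]
  split <;> simp

lemma normT (h1 : ∀ l l' : L, (ContinuousLinearMap.adjoint (T l)).comp (T l') =
      if l = l' then 1 else 0) (l : L) (x : H) : ‖T l x‖ = ‖x‖ := by
  have h := innerT T h1 l l x x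
  simp only [if_pos] at h
  rw [@inner_self_eq_norm_sq_to_K ℂ, @inner_self_eq_norm_sq_to_K ℂ] at h
  have hr : ‖T l x‖ ^ 2 = ‖x‖ ^ 2 := by exact_mod_cast h
  calc ‖T l x‖ = Real.sqrt (‖T l x‖ ^ 2) := (Real.sqrt_sq (norm_nonneg _)).symm
    _ = Real.sqrt (‖x‖ ^ 2) := by rw [hr]
    _ = ‖x‖ := Real.sqrt_sq (norm_nonneg _)

end Aux

/-- Words `T_{ℓ₁}⋯T_{ℓₘ} e₀` are unit vectors, and two such words are orthogonal
whenever their `0`-padded digit sequences differ. -/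
theorem stmt9 {H : Type*} [NormedAddCommGroup H] [InnerProductSpace ℂ H]
    [CompleteSpace H]
    {L : Type*} [Fintype L] [DecidableEq L]
    (T : L → H →L[ℂ] H)
    (h1 : ∀ l l' : L, (ContinuousLinearMap.adjoint (T l)).comp (T l') =
      if l = l' then 1 else 0)
    (h2 : ∑ l : L, (T l).comp (ContinuousLinearMap.adjoint (T l)) = 1)
    (z : L) (e0 : H) (he0 : ‖e0‖ = 1) (hfix : T z e0 = e0) :
    (∀ w : List L, ‖cuntzWord T e0 w‖ = 1) ∧
    (∀ a b : List L, (fun k : ℕ => a.getD k z) ≠ (fun k : ℕ => b.getD k z) →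
      ⟪cuntzWord T e0 a, cuntzWord T e0 b⟫_ℂ = 0) := by
  have hcons : ∀ (l : L) (w : List L), cuntzWord T e0 (l :: w) = T l (cuntzWord T e0 w) := by
    intro l w; rfl
  have hnil : cuntzWord T e0 ([] : List L) = e0 := rfl
  have base : ∀ (l : L) (x : H), ⟪e0, T l x⟫_ℂ = if z = l then ⟪e0, x⟫_ℂ else 0 := by
    intro l x
    calc ⟪e0, T l x⟫_ℂ = ⟪T z e0, T l x⟫_ℂ := by rw [hfix]
      _ = if z = l then ⟪e0, x⟫_ℂ else 0 := innerT T h1 z l e0 x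
  constructor
  · intro w
    induction w with
    | nil => simpa [hnil] using he0
    | cons l w ih => rw [hcons, normT T h1]; exact ih
  · have key : ∀ n : ℕ, ∀ a b : List L, a.length + b.length ≤ n →
        (fun k : ℕ => a.getD k z) ≠ (fun k : ℕ => b.getD k z) →
        ⟪cuntzWord T e0 a, cuntzWord T e0 b⟫_ℂ = 0 := by
      intro n
      induction n with
      | zero =>
        intro a b hlen h
        have ha : a = [] := List.length_eq_zero_iff.mp (by omega)
        have hb : b = [] := List.length_eq_zero_iff.mp (by omega)
        subst ha; subst hb; exact absurd rfl h
      | succ n ih =>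
        intro a b hlen h
        match a, b with
        | [], [] => exact absurd rfl h
        | [], l :: b' =>
          rw [hnil, hcons, base]
          by_cases hl : z = l
          · subst hl
            rw [if_pos rfl]
            refine ih [] b' (by simp at hlen ⊢; omega) ?_
            intro heq
            apply h
            funext k
            cases k with
            | zero => simp
            | succ k => simpa using congrFun heq k
          · rw [if_neg hl]
        | l :: a', [] =>
          rw [hcons, hnil, ← inner_conj_symm, base]
          by_cases hl : z = l
          · rw [if_pos hl, inner_conj_symm]
            subst hl
            refine ih a' [] (by simp at hlen ⊢; omega) ?_
            intro heq
            apply h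
            funext k
            cases k with
            | zero => simp
            | succ k => simpa using congrFun heq k
          · rw [if_neg hl]; simp
        | l :: a', l' :: b' =>
          rw [hcons, hcons, innerT T h1]
          by_cases hl : l = l'
          · rw [if_pos hl]
            refine ih a' b' (by simp at hlen ⊢; omega) ?_
            intro heq
            apply h
            funext k
            cases k with
            | zero => simp [hl]
            | succ k => simpa using congrFun heq k
          · rw [if_neg hl]
    intro a b h
    exact key (a.length + b.length) a b le_rfl h
end

section
/- Consider the middle-quarter-type Cantor measure on ℝ: the unique probability measure μ with μ = ½(μ∘S_0^{-1} + μ∘S_{1/2}^{-1}), S_b(x) = x/4 + b. Let L = {0, 1} and define τ_0(s) = 4s, τ_1(s) = 4s + 1 on ℤ. Then the maps T_ℓ on L²(μ) determined by T_ℓ e_s = e_{τ_ℓ(s)} for s ∈ ℤ (where e_s(x) = e^{2πi s x}) extend to well-defined isometries of L²(μ) satisfying T_ℓ* T_{ℓ'} = δ_{ℓℓ'} I. -/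
/-!
The measure `μ` lives on `K = [0, 2/3]`: both contractions map `K` into `K` and shrink the
distance to `K` by `1/4`, so `μ {d(·, K) > R} ≤ μ {d(·, K) > 4R} ≤ ⋯ → 0`. As `K ⊂ [0, 1)`, the
map `Φ x = {4x}` undoes both contractions `μ`-a.e., hence preserves `μ`, and `T_a f = e_a · f ∘ Φ`
is an isometry of `L²(μ)` sending `e_s` to `e_{4s+a}` (as `e_s` is `1`-periodic). For `b - a`
odd, `⟪T_a F, T_b G⟫ = ∫ e_{b-a} · (conj F · G) ∘ Φ dμ`, and the self-similarity splits this
integral into two halves which cancel, because `Φ (x/4 + 1/2) = Φ (x/4)` while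
`e_{b-a} (y + 1/2) = -e_{b-a} y`.
-/

open MeasureTheory Complex

/-- `e_s(x) = e^{2πi s x}` on `ℝ`, for `s : ℤ`. -/
noncomputable def esZ (s : ℤ) (x : ℝ) : ℂ :=
  Complex.exp (2 * Real.pi * Complex.I * (s : ℂ) * (x : ℂ))

/-- `τ_ℓ(s) = 4s + ℓ` for `ℓ ∈ {0,1}`. -/
def tauZ (l : Fin 2) (s : ℤ) : ℤ := 4 * s + (l : ℤ)

open Set Metric Filter Topology
open scoped ENNReal NNReal InnerProductSpace ComplexConjugate

section SelfSimilar

variable {α : Type*} [MeasurableSpace α] {μ : Measure α} {S₀ S₁ : α → α}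

abbrev IsSelfSimilar (μ : Measure α) (S₀ S₁ : α → α) : Prop :=
  μ = (2 : ℝ≥0∞)⁻¹ • (μ.map S₀ + μ.map S₁)

lemma measure_le_of_preimage_subset (hμ : IsSelfSimilar μ S₀ S₁)
    (hS₀ : Measurable S₀) (hS₁ : Measurable S₁) {E F : Set α} (hE : MeasurableSet E)
    (h₀ : S₀ ⁻¹' E ⊆ F) (h₁ : S₁ ⁻¹' E ⊆ F) : μ E ≤ μ F := by
  calc μ E = 2⁻¹ * (μ (S₀ ⁻¹' E) + μ (S₁ ⁻¹' E)) := by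
        conv_lhs => rw [hμ]
        rw [Measure.smul_apply, Measure.add_apply, Measure.map_apply hS₀ hE,
          Measure.map_apply hS₁ hE, smul_eq_mul]
    _ ≤ 2⁻¹ * (μ F + μ F) := by gcongr
    _ = μ F := by
        rw [← two_mul, ← mul_assoc, ENNReal.inv_mul_cancel two_ne_zero ENNReal.ofNat_ne_top,
          one_mul]

lemma measurePreserving_of_ae_leftInverse (hμ : IsSelfSimilar μ S₀ S₁)
    (hS₀ : Measurable S₀) (hS₁ : Measurable S₁) {Φ : α → α} (hΦ : Measurable Φ)
    (h₀ : ∀ᵐ x ∂μ, Φ (S₀ x) = x) (h₁ : ∀ᵐ x ∂μ, Φ (S₁ x) = x) :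
    MeasurePreserving Φ μ μ := by
  refine ⟨hΦ, ?_⟩
  have hid : ∀ {S : α → α}, Measurable S → (∀ᵐ x ∂μ, Φ (S x) = x) → (μ.map S).map Φ = μ :=
    fun {S} hS h => by
      rw [Measure.map_map hΦ hS, Measure.map_congr (show Φ ∘ S =ᵐ[μ] id from h), Measure.map_id]
  conv_lhs => rw [hμ]
  rw [Measure.map_smul, Measure.map_add _ _ hΦ, hid hS₀ h₀, hid hS₁ h₁, ← two_smul ℝ≥0∞ μ,
    smul_smul, ENNReal.inv_mul_cancel two_ne_zero ENNReal.ofNat_ne_top, one_smul]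

lemma integral_map_add_map_eq_zero {β E : Type*} [MeasurableSpace β] [NormedAddCommGroup E]
    [NormedSpace ℝ E] {ν : Measure α} {T₀ T₁ : α → β} (hT₀ : AEMeasurable T₀ ν)
    (hT₁ : AEMeasurable T₁ ν) {h : β → E} (hh : StronglyMeasurable h)
    (hanti : ∀ x, h (T₁ x) = -h (T₀ x)) : ∫ y, h y ∂(ν.map T₀ + ν.map T₁) = 0 := by
  by_cases hint : Integrable h (ν.map T₀ + ν.map T₁)
  · rw [integral_add_measure (integrable_add_measure.1 hint).1 (integrable_add_measure.1 hint).2,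
      integral_map hT₀ hh.aestronglyMeasurable, integral_map hT₁ hh.aestronglyMeasurable]
    simp only [hanti, integral_neg, add_neg_cancel]
  · exact integral_undef hint

end SelfSimilar

section Support

variable {X : Type*} [MetricSpace X] {S₀ S₁ : X → X} {K : Set X} {r : ℝ≥0}

lemma infDist_le_mul_infDist_of_mapsTo {S : X → X} (hS : LipschitzWith r S)
    (hSK : MapsTo S K K) (hK : K.Nonempty) (x : X) : infDist (S x) K ≤ r * infDist x K := by
  have : Nonempty K := hK.to_subtype
  rw [infDist_eq_iInf (x := x), Real.mul_iInf_of_nonneg r.coe_nonneg]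
  exact le_ciInf fun y => (infDist_le_dist_of_mem (hSK y.2)).trans (hS.dist_le_mul x y)

variable [MeasurableSpace X] [BorelSpace X] {μ : Measure X}

lemma measure_lt_mul_infDist_le (hμ : IsSelfSimilar μ S₀ S₁)
    (hS₀ : LipschitzWith r S₀) (hS₁ : LipschitzWith r S₁) (hS₀K : MapsTo S₀ K K)
    (hS₁K : MapsTo S₁ K K) (hK : K.Nonempty) {R c : ℝ} (hc : 0 ≤ c) :
    μ {x | R < c * infDist x K} ≤ μ {x | R < c * r * infDist x K} := by
  have hpre : ∀ {S : X → X}, LipschitzWith r S → MapsTo S K K →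
      S ⁻¹' {x | R < c * infDist x K} ⊆ {x | R < c * r * infDist x K} := fun {S} hS hSK x hx =>
    calc R < c * infDist (S x) K := hx
      _ ≤ c * (r * infDist x K) := by gcongr; exact infDist_le_mul_infDist_of_mapsTo hS hSK hK x
      _ = c * r * infDist x K := (mul_assoc ..).symm
  exact measure_le_of_preimage_subset hμ hS₀.continuous.measurable hS₁.continuous.measurable
    (measurableSet_lt measurable_const (by fun_prop)) (hpre hS₀ hS₀K) (hpre hS₁ hS₁K)

lemma measure_lt_infDist_eq_zero [IsFiniteMeasure μ] (hμ : IsSelfSimilar μ S₀ S₁)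
    (hS₀ : LipschitzWith r S₀) (hS₁ : LipschitzWith r S₁) (hr : r < 1) (hS₀K : MapsTo S₀ K K)
    (hS₁K : MapsTo S₁ K K) (hK : K.Nonempty) {R : ℝ} (hR : 0 < R) :
    μ {x | R < infDist x K} = 0 := by
  set E : ℕ → Set X := fun n => {x | R < r ^ n * infDist x K}
  have hle : ∀ n, μ {x | R < infDist x K} ≤ μ (E n) := by
    intro n
    induction n with
    | zero => simp [E]
    | succ n ih =>
      simpa only [E, pow_succ] using ih.trans <|
        measure_lt_mul_infDist_le hμ hS₀ hS₁ hS₀K hS₁K hK (pow_nonneg r.coe_nonneg n)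
  have hanti : Antitone E := fun m n hmn x (hx : R < _) => show R < _ from hx.trans_le <|
    mul_le_mul_of_nonneg_right (pow_le_pow_of_le_one r.coe_nonneg (by exact_mod_cast hr.le) hmn)
      infDist_nonneg
  have hempty : ⋂ n, E n = ∅ := by
    refine eq_empty_of_forall_notMem fun x hx => ?_
    have ht : Tendsto (fun n => (r : ℝ) ^ n * infDist x K) atTop (𝓝 0) := by
      simpa using (tendsto_pow_atTop_nhds_zero_of_lt_one r.coe_nonneg hr).mul_const (infDist x K)
    obtain ⟨n, hn⟩ := (ht.eventually (gt_mem_nhds hR)).exists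
    exact (mem_iInter.1 hx n).out.not_gt hn
  have ht := tendsto_measure_iInter_atTop
    (fun n => (measurableSet_lt measurable_const (by fun_prop)).nullMeasurableSet) hanti
    ⟨0, measure_ne_top μ (E 0)⟩
  rw [hempty, measure_empty] at ht
  exact nonpos_iff_eq_zero.1 (ge_of_tendsto' ht hle)

theorem ae_mem_of_selfSimilar [IsFiniteMeasure μ] (hμ : IsSelfSimilar μ S₀ S₁)
    (hS₀ : LipschitzWith r S₀) (hS₁ : LipschitzWith r S₁) (hr : r < 1) (hS₀K : MapsTo S₀ K K)
    (hS₁K : MapsTo S₁ K K) (hKc : IsClosed K) (hK : K.Nonempty) : ∀ᵐ x ∂μ, x ∈ K := by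
  have hnull : ∀ n : ℕ, ∀ᵐ x ∂μ, infDist x K ≤ 1 / (n + 1) := fun n => by
    rw [ae_iff]
    simpa only [not_le] using
      measure_lt_infDist_eq_zero hμ hS₀ hS₁ hr hS₀K hS₁K hK Nat.one_div_pos_of_nat
  filter_upwards [ae_all_iff.2 hnull] with x hx
  rw [hKc.mem_iff_infDist_zero hK]
  refine le_antisymm (not_lt.1 fun hpos => ?_) infDist_nonneg
  obtain ⟨n, hn⟩ := exists_nat_one_div_lt hpos
  exact (hx n).not_gt hn

end Support

namespace MeasureTheory.Lp

variable {α β 𝕜 E : Type*} [MeasurableSpace α] [MeasurableSpace β] {μ : Measure α}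
  {ν : Measure β} {p : ℝ≥0∞} [NormedField 𝕜] [NormedAddCommGroup E] [NormedSpace 𝕜 E] {w : α → 𝕜}

lemma memLp_smul_of_norm_eq_one (hw : AEStronglyMeasurable w μ) (hw1 : ∀ᵐ x ∂μ, ‖w x‖ = 1)
    (f : Lp E p μ) : MemLp (fun x => w x • f x) p μ :=
  (memLp_congr_norm (hw.smul (Lp.aestronglyMeasurable f)) (Lp.aestronglyMeasurable f) <| by
    filter_upwards [hw1] with x hx
    rw [Pi.smul_apply', norm_smul, hx, one_mul]).2 (Lp.memLp f)

variable [Fact (1 ≤ p)]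

noncomputable def smulOfNormEqOneₗᵢ (hw : AEStronglyMeasurable w μ)
    (hw1 : ∀ᵐ x ∂μ, ‖w x‖ = 1) : Lp E p μ →ₗᵢ[𝕜] Lp E p μ where
  toFun f := (memLp_smul_of_norm_eq_one hw hw1 f).toLp fun x => w x • f x
  map_add' f g := by
    rw [← MemLp.toLp_add]
    refine MemLp.toLp_congr _ _ ?_
    filter_upwards [Lp.coeFn_add f g] with x hx
    rw [hx, Pi.add_apply, smul_add]
    rfl
  map_smul' c f := by
    rw [RingHom.id_apply, ← MemLp.toLp_const_smul]
    refine MemLp.toLp_congr _ _ ?_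
    filter_upwards [Lp.coeFn_smul c f] with x hx
    rw [hx, Pi.smul_apply, smul_comm]
    rfl
  norm_map' f := by
    rw [LinearMap.coe_mk, AddHom.coe_mk, Lp.norm_toLp, Lp.norm_def]
    congr 1
    refine eLpNorm_congr_norm_ae ?_
    filter_upwards [hw1] with x hx
    rw [norm_smul, hx, one_mul]

lemma coeFn_smulOfNormEqOneₗᵢ (hw : AEStronglyMeasurable w μ) (hw1 : ∀ᵐ x ∂μ, ‖w x‖ = 1)
    (f : Lp E p μ) : smulOfNormEqOneₗᵢ hw hw1 f =ᵐ[μ] fun x => w x • f x :=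
  MemLp.coeFn_toLp (memLp_smul_of_norm_eq_one hw hw1 f)

noncomputable def weightedCompₗᵢ (hw : AEStronglyMeasurable w μ) (hw1 : ∀ᵐ x ∂μ, ‖w x‖ = 1)
    {Φ : α → β} (hΦ : MeasurePreserving Φ μ ν) : Lp E p ν →ₗᵢ[𝕜] Lp E p μ :=
  (smulOfNormEqOneₗᵢ hw hw1).comp (compMeasurePreservingₗᵢ 𝕜 Φ hΦ)

lemma coeFn_weightedCompₗᵢ (hw : AEStronglyMeasurable w μ) (hw1 : ∀ᵐ x ∂μ, ‖w x‖ = 1)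
    {Φ : α → β} (hΦ : MeasurePreserving Φ μ ν) (f : Lp E p ν) :
    weightedCompₗᵢ hw hw1 hΦ f =ᵐ[μ] fun x => w x • f (Φ x) := by
  filter_upwards [coeFn_smulOfNormEqOneₗᵢ hw hw1 (compMeasurePreservingₗᵢ 𝕜 Φ hΦ f),
    coeFn_compMeasurePreserving f hΦ] with x hx hcomp
  rw [weightedCompₗᵢ, LinearIsometry.coe_comp, Function.comp_apply, hx]
  exact congrArg (w x • ·) hcomp

end MeasureTheory.Lp

namespace ContinuousLinearMap

variable {𝕜 E F G : Type*} [RCLike 𝕜] [NormedAddCommGroup E] [InnerProductSpace 𝕜 E]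
  [CompleteSpace E] [NormedAddCommGroup F] [InnerProductSpace 𝕜 F] [CompleteSpace F]
  [NormedAddCommGroup G] [InnerProductSpace 𝕜 G]

lemma adjoint_comp_eq_zero_of_inner {A : E →L[𝕜] F} {B : G →L[𝕜] F}
    (h : ∀ x y, ⟪A x, B y⟫_𝕜 = 0) : adjoint A ∘L B = 0 :=
  ext fun y => ext_inner_left 𝕜 fun x => by
    rw [comp_apply, adjoint_inner_right, zero_apply, inner_zero_right, h]

end ContinuousLinearMap

section Exponentials

lemma norm_esZ (s : ℤ) (x : ℝ) : ‖esZ s x‖ = 1 := by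
  rw [esZ, show 2 * (Real.pi : ℂ) * I * s * x = ((2 * Real.pi * s * x : ℝ) : ℂ) * I by
    push_cast; ring, norm_exp_ofReal_mul_I]

lemma continuous_esZ (s : ℤ) : Continuous (esZ s) := by
  unfold esZ; fun_prop

lemma conj_esZ_mul_esZ (a b : ℤ) (x : ℝ) : conj (esZ a x) * esZ b x = esZ (b - a) x := by
  simp only [esZ, ← exp_conj, ← exp_add, map_mul, map_ofNat, conj_ofReal, conj_I, map_intCast]
  push_cast
  ring_nf

lemma esZ_add_half_of_odd {n : ℤ} (hn : Odd n) (x : ℝ) : esZ n (x + 1 / 2) = -esZ n x := by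
  obtain ⟨k, rfl⟩ := hn
  unfold esZ
  push_cast
  rw [show 2 * (Real.pi : ℂ) * I * (2 * k + 1) * (x + 1 / 2)
      = 2 * Real.pi * I * (2 * k + 1) * x + (k * (2 * Real.pi * I) + Real.pi * I) by ring,
    exp_add, exp_add, exp_int_mul_two_pi_mul_I, exp_pi_mul_I]
  ring

lemma esZ_int_fract (s : ℤ) (x : ℝ) : esZ s (Int.fract x) = esZ s x := by
  unfold esZ
  rw [Int.fract]
  push_cast
  rw [show 2 * (Real.pi : ℂ) * I * s * (x - ⌊x⌋)
      = 2 * Real.pi * I * s * x + ((-(s * ⌊x⌋) : ℤ) : ℂ) * (2 * Real.pi * I) by push_cast; ring,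
    exp_add, exp_int_mul_two_pi_mul_I, mul_one]

lemma esZ_mul_esZ_four_mul (a s : ℤ) (x : ℝ) : esZ a x * esZ s (4 * x) = esZ (4 * s + a) x := by
  simp only [esZ, ← exp_add]
  push_cast
  ring_nf

end Exponentials

section Cantor

variable {μ : Measure ℝ}

lemma fract_four_mul_div_four (x : ℝ) : Int.fract (4 * (x / 4)) = Int.fract x := by
  rw [mul_div_cancel₀ x four_ne_zero]

lemma fract_four_mul_div_four_add_half (x : ℝ) :
    Int.fract (4 * (x / 4 + 1 / 2)) = Int.fract x := by
  rw [show 4 * (x / 4 + 1 / 2) = x + (2 : ℤ) by push_cast; ring, Int.fract_add_intCast]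

lemma cantor_ae_mem_Icc [IsFiniteMeasure μ] (hμ : IsSelfSimilar μ (· / 4) (· / 4 + 1 / 2)) :
    ∀ᵐ x ∂μ, x ∈ Icc (0 : ℝ) (2 / 3) := by
  have hlip (b : ℝ) : LipschitzWith (1 / 4) (· / 4 + b) :=
    LipschitzWith.of_dist_le_mul fun x y => by
      rw [Real.dist_eq, Real.dist_eq, show x / 4 + b - (y / 4 + b) = 1 / 4 * (x - y) by ring,
        abs_mul, abs_of_pos (by norm_num : (0 : ℝ) < 1 / 4)]
      norm_num
  have hmaps (b : ℝ) (hb : b ∈ Icc 0 (1 / 2)) :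
      MapsTo (· / 4 + b) (Icc 0 (2 / 3)) (Icc 0 (2 / 3)) :=
    fun x hx => ⟨by linarith [hx.1, hb.1], by linarith [hx.2, hb.2]⟩
  refine ae_mem_of_selfSimilar (S₀ := (· / 4 + 0)) (by simpa only [add_zero] using hμ) (hlip 0)
    (hlip (1 / 2)) (by norm_num) (hmaps 0 (by norm_num)) (hmaps (1 / 2) (by norm_num))
    isClosed_Icc (nonempty_Icc.2 (by norm_num))

lemma measurePreserving_fract_four_mul [IsFiniteMeasure μ]
    (hμ : IsSelfSimilar μ (· / 4) (· / 4 + 1 / 2)) :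
    MeasurePreserving (fun x : ℝ => Int.fract (4 * x)) μ μ := by
  have hfract : ∀ᵐ x ∂μ, Int.fract x = x := by
    filter_upwards [cantor_ae_mem_Icc hμ] with x hx
    exact Int.fract_eq_self.2 ⟨hx.1, hx.2.trans_lt (by norm_num)⟩
  refine measurePreserving_of_ae_leftInverse hμ (by fun_prop) (by fun_prop)
    (measurable_fract.comp (measurable_const_mul 4)) ?_ ?_ <;>
  filter_upwards [hfract] with x hx
  · rw [fract_four_mul_div_four, hx]
  · rw [fract_four_mul_div_four_add_half, hx]

lemma integral_esZ_mul_comp_fract_eq_zero (hμ : IsSelfSimilar μ (· / 4) (· / 4 + 1 / 2))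
    {n : ℤ} (hn : Odd n) {k : ℝ → ℂ} (hk : StronglyMeasurable k) :
    ∫ x, esZ n x * k (Int.fract (4 * x)) ∂μ = 0 := by
  rw [hμ, integral_smul_measure, integral_map_add_map_eq_zero (by fun_prop) (by fun_prop),
    smul_zero]
  · exact (continuous_esZ n).stronglyMeasurable.mul
      (hk.comp_measurable (measurable_fract.comp (measurable_const_mul 4)))
  · intro x
    rw [fract_four_mul_div_four_add_half, fract_four_mul_div_four, esZ_add_half_of_odd hn, neg_mul]

end Cantor

section Operators

variable {μ : Measure ℝ} (hΦ : MeasurePreserving (fun x : ℝ => Int.fract (4 * x)) μ μ)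

noncomputable def esZWeightedComp (a : ℤ) : Lp ℂ 2 μ →ₗᵢ[ℂ] Lp ℂ 2 μ :=
  Lp.weightedCompₗᵢ (continuous_esZ a).aestronglyMeasurable (ae_of_all _ (norm_esZ a)) hΦ

lemma coeFn_esZWeightedComp (a : ℤ) (f : Lp ℂ 2 μ) :
    esZWeightedComp hΦ a f =ᵐ[μ] fun x => esZ a x * f (Int.fract (4 * x)) :=
  Lp.coeFn_weightedCompₗᵢ _ _ hΦ f

lemma esZWeightedComp_toLp_esZ (a s : ℤ) (hs : MemLp (esZ s) 2 μ)
    (has : MemLp (esZ (4 * s + a)) 2 μ) :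
    esZWeightedComp hΦ a (hs.toLp (esZ s)) = has.toLp (esZ (4 * s + a)) := by
  refine Lp.ext ?_
  filter_upwards [coeFn_esZWeightedComp hΦ a _,
    hΦ.quasiMeasurePreserving.ae_eq_comp hs.coeFn_toLp, has.coeFn_toLp] with x hx hcomp hres
  rw [hx, hres, ← esZ_mul_esZ_four_mul, ← esZ_int_fract s]
  exact congrArg (esZ a x * ·) hcomp

lemma inner_esZWeightedComp_eq_zero (hμ : IsSelfSimilar μ (· / 4) (· / 4 + 1 / 2))
    {a b : ℤ} (hab : Odd (b - a)) (F G : Lp ℂ 2 μ) :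
    ⟪esZWeightedComp hΦ a F, esZWeightedComp hΦ b G⟫_ℂ = 0 := by
  rw [L2.inner_def, ← integral_esZ_mul_comp_fract_eq_zero hμ hab
    ((Lp.stronglyMeasurable F).star.mul (Lp.stronglyMeasurable G))]
  refine integral_congr_ae ?_
  filter_upwards [coeFn_esZWeightedComp hΦ a F, coeFn_esZWeightedComp hΦ b G] with x hF hG
  rw [hF, hG, RCLike.inner_apply, ← conj_esZ_mul_esZ, map_mul]
  simp only [Pi.mul_apply, Pi.star_apply, RCLike.star_def]
  ring

end Operators

/-- For the middle-quarter-type Cantor measure, the maps `T_ℓ e_s = e_{τ_ℓ(s)}` extend to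
isometries of `L²(μ)` with `T_ℓ* T_ℓ' = δ_{ℓℓ'} I`. -/
theorem stmt10 (μ : Measure ℝ) (hprob : IsProbabilityMeasure μ)
    (hself : μ = (2 : ENNReal)⁻¹ •
      (Measure.map (fun x : ℝ => x / 4) μ + Measure.map (fun x : ℝ => x / 4 + 1 / 2) μ))
    (hes : ∀ s : ℤ, MemLp (esZ s) 2 μ) :
    ∃ T : Fin 2 → (Lp ℂ 2 μ →L[ℂ] Lp ℂ 2 μ),
      (∀ l : Fin 2, ∀ f : Lp ℂ 2 μ, ‖T l f‖ = ‖f‖) ∧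
      (∀ l l' : Fin 2, (ContinuousLinearMap.adjoint (T l)).comp (T l') =
        if l = l' then 1 else 0) ∧
      (∀ l : Fin 2, ∀ s : ℤ, T l ((hes s).toLp (esZ s)) =
        (hes (tauZ l s)).toLp (esZ (tauZ l s))) := by
  have hΦ := measurePreserving_fract_four_mul hself
  refine ⟨fun l => (esZWeightedComp hΦ l).toContinuousLinearMap,
    fun l => (esZWeightedComp hΦ l).norm_map, fun l l' => ?_,
    fun l s => esZWeightedComp_toLp_esZ hΦ l s (hes s) (hes (tauZ l s))⟩
  split_ifs with hll'
  · subst hll'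
    exact (ContinuousLinearMap.norm_map_iff_adjoint_comp_self _).1
      (esZWeightedComp hΦ l).norm_map
  · refine ContinuousLinearMap.adjoint_comp_eq_zero_of_inner
      (inner_esZWeightedComp_eq_zero hΦ hself ?_)
    fin_cases l <;> fin_cases l' <;> first | exact absurd rfl hll' | decide
end

section
/- Let μ be the self-similar measure on ℝ with μ = ½(μ∘S_0^{-1} + μ∘S_{1/2}^{-1}), S_b(x) = x/4 + b, and let Λ = {Σ_{k=1}^n 4^{k-1} ℓ_k : n ≥ 0, ℓ_k ∈ {0,1}} ⊆ ℤ≥0. Then the exponentials {e_ξ : ξ ∈ Λ}, e_ξ(x) = e^{2πi ξ x}, form an orthogonal family in L²(μ): for distinct ξ, ξ' ∈ Λ, ∫ e^{2πi(ξ-ξ')x} dμ(x) = 0. -/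
/-!
Self-similarity turns into the functional equation `μ̂(t) = m(t) μ̂(t / 4)` for the
characteristic function, with mask `m(t) = (1 + e^{it/2}) / 2`. At `t = 2πs` the mask vanishes
for odd integers `s` and equals `1` for even ones, so `μ̂(2π · 4^j u) = μ̂(2π u) = 0` whenever
`u` is odd. The difference of two distinct points of `Λ` has base-4 digits in `{-1, 0, 1}`;
its lowest nonzero digit is odd, so the difference is of exactly this form `4^j u`.
-/

open MeasureTheory Complex
open scoped ENNReal

/-- The spectrum `Λ = {∑ 4^{k-1} ℓ_k : ℓ_k ∈ {0,1}}` of finite base-4 expansions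
with digits 0 and 1. -/
def LambdaSet : Set ℤ :=
  {x | ∃ (n : ℕ) (l : Fin n → Fin 2), x = ∑ k : Fin n, 4 ^ (k : ℕ) * ((l k : ℕ) : ℤ)}

open Finset in
lemma exists_eq_pow_mul_odd_of_sum_pow_mul {b : ℤ} (hb : Even b) (N : ℕ) (d : ℕ → ℤ)
    (hd : ∀ k, d k = 0 ∨ Odd (d k)) (hsum : ∑ k ∈ range N, b ^ k * d k ≠ 0) :
    ∃ j u, Odd u ∧ ∑ k ∈ range N, b ^ k * d k = b ^ j * u := by
  induction N generalizing d with
  | zero => simp at hsum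
  | succ N ih =>
    set s := ∑ k ∈ range N, b ^ k * d (k + 1)
    have h_split : ∑ k ∈ range (N + 1), b ^ k * d k = d 0 + b * s := by
      simp only [sum_range_succ', pow_succ', mul_assoc, ← mul_sum, s]
      ring
    rw [h_split] at hsum ⊢
    rcases hd 0 with h0 | h0
    · rw [h0, zero_add] at hsum ⊢
      obtain ⟨j, u, hu, hs⟩ :=
        ih (fun k ↦ d (k + 1)) (fun k ↦ hd (k + 1)) (right_ne_zero_of_mul hsum)
      exact ⟨j + 1, u, hu, by rw [pow_succ', mul_assoc, ← hs]⟩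
    · exact ⟨0, d 0 + b * s, h0.add_even (hb.mul_right s), by ring⟩

lemma exists_binary_digits_of_mem_LambdaSet {x : ℤ} (hx : x ∈ LambdaSet) :
    ∃ n, ∃ L : ℕ → ℤ, (∀ k, L k = 0 ∨ L k = 1) ∧
      ∀ N, n ≤ N → x = ∑ k ∈ Finset.range N, 4 ^ k * L k := by
  obtain ⟨n, l, rfl⟩ := hx
  set L : ℕ → ℤ := fun k ↦ if h : k < n then ((l ⟨k, h⟩ : ℕ) : ℤ) else 0
  refine ⟨n, L, fun k ↦ ?_, fun N hN ↦ ?_⟩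
  · by_cases h : k < n
    · have := (l ⟨k, h⟩).isLt
      simp only [L, dif_pos h]
      omega
    · simp [L, h]
  · calc ∑ k : Fin n, 4 ^ (k : ℕ) * ((l k : ℕ) : ℤ)
        = ∑ k : Fin n, 4 ^ (k : ℕ) * L k := by simp [L]
      _ = ∑ k ∈ Finset.range n, 4 ^ k * L k := Fin.sum_univ_eq_sum_range (fun k ↦ 4 ^ k * L k) n
      _ = ∑ k ∈ Finset.range N, 4 ^ k * L k :=
        Finset.sum_subset (Finset.range_subset_range.2 hN) fun k _ hk ↦ by simp_all [L]

lemma exists_sub_eq_four_pow_mul_odd {x y : ℤ} (hx : x ∈ LambdaSet) (hy : y ∈ LambdaSet)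
    (hne : x ≠ y) : ∃ j u, Odd u ∧ x - y = 4 ^ j * u := by
  obtain ⟨n, L, hL, hxL⟩ := exists_binary_digits_of_mem_LambdaSet hx
  obtain ⟨m, M, hM, hyM⟩ := exists_binary_digits_of_mem_LambdaSet hy
  have h_sub : x - y = ∑ k ∈ Finset.range (max n m), 4 ^ k * (L k - M k) := by
    simp only [hxL _ (le_max_left n m), hyM _ (le_max_right n m), mul_sub, Finset.sum_sub_distrib]
  rw [h_sub]
  refine exists_eq_pow_mul_odd_of_sum_pow_mul (by decide) _ _ (fun k ↦ ?_)
    (h_sub ▸ sub_ne_zero.2 hne)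
  rcases hL k with h | h <;> rcases hM k with h' | h' <;> simp [h, h']

lemma charFun_smul_measure {E : Type*} [MeasurableSpace E] [Inner ℝ E] (c : ℝ≥0∞)
    (μ : Measure E) (t : E) : charFun (c • μ) t = c.toReal • charFun μ t :=
  integral_smul_measure _ c

lemma charFun_add_measure {E : Type*} [MeasurableSpace E] [NormedAddCommGroup E]
    [InnerProductSpace ℝ E] [OpensMeasurableSpace E] (μ ν : Measure E) [IsFiniteMeasure μ]
    [IsFiniteMeasure ν] (t : E) : charFun (μ + ν) t = charFun μ t + charFun ν t := by
  simp only [charFun_eq_integral_innerProbChar]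
  exact integral_add_measure (BoundedContinuousFunction.integrable _ _)
    (BoundedContinuousFunction.integrable _ _)

lemma charFun_eq_of_map_affine_average {μ : Measure ℝ} [IsFiniteMeasure μ] {r b : ℝ}
    (hμ : μ = (2 : ℝ≥0∞)⁻¹ • (μ.map (r * ·) + μ.map (fun x ↦ r * x + b))) (t : ℝ) :
    charFun μ t = (1 + cexp (t * b * I)) / 2 * charFun μ (r * t) := by
  have h_comp : μ.map (fun x ↦ r * x + b) = (μ.map (r * ·)).map (· + b) := by
    rw [Measure.map_map (by fun_prop) (by fun_prop)]
    rfl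
  conv_lhs => rw [hμ]
  rw [charFun_smul_measure, charFun_add_measure, h_comp, charFun_map_add_const, charFun_map_mul]
  simp only [ENNReal.toReal_inv, ENNReal.toReal_ofNat, RCLike.inner_apply, Real.ringHom_apply,
    ofReal_mul, smul_add, real_smul, ofReal_inv, ofReal_ofNat]
  ring

lemma charFun_two_pi_mul_odd_eq_zero {μ : Measure ℝ} [IsFiniteMeasure μ] {r : ℝ}
    (hμ : μ = (2 : ℝ≥0∞)⁻¹ • (μ.map (r * ·) + μ.map (fun x ↦ r * x + 2⁻¹))) {u : ℤ}
    (hu : Odd u) : charFun μ (2 * Real.pi * u) = 0 := by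
  obtain ⟨m, rfl⟩ := hu
  have h_mask : cexp (↑(2 * Real.pi * ↑(2 * m + 1)) * ↑(2⁻¹ : ℝ) * I) = -1 := by
    have : (↑(2 * Real.pi * ↑(2 * m + 1)) * ↑(2⁻¹ : ℝ) * I : ℂ)
        = m * (2 * Real.pi * I) + Real.pi * I := by push_cast; ring
    rw [this, exp_add, exp_int_mul_two_pi_mul_I, exp_pi_mul_I, one_mul]
  rw [charFun_eq_of_map_affine_average hμ, h_mask]
  simp

section QuarterCantor

variable {μ : Measure ℝ} [IsFiniteMeasure μ]
  (hμ : μ = (2 : ℝ≥0∞)⁻¹ • (μ.map (4⁻¹ * ·) + μ.map (fun x ↦ 4⁻¹ * x + 2⁻¹)))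
include hμ

lemma charFun_two_pi_mul_four_mul (n : ℤ) :
    charFun μ (2 * Real.pi * (4 * n : ℤ)) = charFun μ (2 * Real.pi * n) := by
  have h_mask : cexp (↑(2 * Real.pi * ↑(4 * n)) * ↑(2⁻¹ : ℝ) * I) = 1 := by
    have : (↑(2 * Real.pi * ↑(4 * n)) * ↑(2⁻¹ : ℝ) * I : ℂ) = (2 * n : ℤ) * (2 * Real.pi * I) := by
      push_cast; ring
    rw [this, exp_int_mul_two_pi_mul_I]
  have h_arg : 4⁻¹ * (2 * Real.pi * ((4 * n : ℤ) : ℝ)) = 2 * Real.pi * n := by push_cast; ring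
  rw [charFun_eq_of_map_affine_average hμ, h_mask, h_arg]
  norm_num

lemma charFun_two_pi_mul_four_pow_mul (k : ℕ) (n : ℤ) :
    charFun μ (2 * Real.pi * (4 ^ k * n : ℤ)) = charFun μ (2 * Real.pi * n) := by
  induction k with
  | zero => simp
  | succ k ih => rw [pow_succ', mul_assoc (4 : ℤ), charFun_two_pi_mul_four_mul hμ, ih]

end QuarterCantor

/-- The exponentials `{e_ξ : ξ ∈ Λ}` are orthogonal in `L²(μ)` for the middle-quarter
Cantor measure. -/
theorem stmt11 (μ : Measure ℝ) (hprob : IsProbabilityMeasure μ)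
    (hself : μ = (2 : ENNReal)⁻¹ •
      (Measure.map (fun x : ℝ => x / 4) μ + Measure.map (fun x : ℝ => x / 4 + 1 / 2) μ)) :
    ∀ ξ ∈ LambdaSet, ∀ ξ' ∈ LambdaSet, ξ ≠ ξ' →
      ∫ x : ℝ, Complex.exp (2 * Real.pi * Complex.I * ((ξ : ℂ) - (ξ' : ℂ)) * (x : ℂ)) ∂μ
        = 0 := by
  have hμ : μ = (2 : ℝ≥0∞)⁻¹ • (μ.map (4⁻¹ * ·) + μ.map (fun x ↦ 4⁻¹ * x + 2⁻¹)) := by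
    simpa only [div_eq_inv_mul, mul_one] using hself
  intro ξ hξ ξ' hξ' hne
  obtain ⟨j, u, hu, h_sub⟩ := exists_sub_eq_four_pow_mul_odd hξ hξ' hne
  have h_charFun : ∫ x : ℝ, cexp (2 * Real.pi * I * ((ξ : ℂ) - (ξ' : ℂ)) * (x : ℂ)) ∂μ
      = charFun μ (2 * Real.pi * (4 ^ j * u : ℤ)) := by
    rw [charFun_apply_real, ← h_sub]
    congr 1 with x
    congr 1
    push_cast
    ring
  rw [h_charFun, charFun_two_pi_mul_four_pow_mul hμ, charFun_two_pi_mul_odd_eq_zero hμ hu]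
end
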